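/- Let X be a compact topological space, f : X → X a homeomorphism, and M⁺, M⁻ ⊆ X closed sets with M⁺ ∪ M⁻ = X, f(M⁺) contained in the interior of M⁺, and f⁻¹(M⁻) contained in the interior of M⁻. Set A := ⋂_{n ≥ 0} fⁿ(M⁺) and R := ⋂_{n ≥ 0} f⁻ⁿ(M⁻). Then for every open set U_A containing A and every open set U_R containing R, there exists n₀ ∈ ℕ such that f^{n₀}(X \ U_R) ⊆ U_A. -/

import Mathlib

/-!
The forward images `fⁿ(M⁺)` form a decreasing sequence of closed, hence compact, sets, so one of
them already lies in the open set `U_A`; likewise some `f⁻ᴺ(M⁻)` lies in `U_R`. A point outside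
`U_R` is therefore mapped by `fᴺ` outside `M⁻`, i.e. into `M⁺`, and a further `fᴹ` takes it
into `U_A`.
-/

open Set

theorem IsClosedMap.iterate {X : Type*} [TopologicalSpace X] {g : X → X} (hg : IsClosedMap g) :
    ∀ n : ℕ, IsClosedMap g^[n]
  | 0 => IsClosedMap.id
  | n + 1 => (hg.iterate n).comp hg

theorem Set.MapsTo.antitone_iterate_image {α : Type*} {g : α → α} {M : Set α}
    (h : MapsTo g M M) : Antitone fun n : ℕ => g^[n] '' M := by
  refine antitone_nat_of_succ_le fun n => ?_
  rw [Function.iterate_succ, image_comp]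
  exact image_mono h.image_subset

theorem exists_iterate_image_subset_of_iInter_subset {X : Type*} [TopologicalSpace X]
    [CompactSpace X] {g : X → X} (hg : IsClosedMap g) {M U : Set X} (hM : IsClosed M)
    (hgM : MapsTo g M M) (hU : IsOpen U) (hsub : ⋂ n : ℕ, g^[n] '' M ⊆ U) :
    ∃ N : ℕ, g^[N] '' M ⊆ U :=
  have hclosed (n : ℕ) : IsClosed (g^[n] '' M) := hg.iterate n M hM
  exists_subset_nhds_of_isCompact' hgM.antitone_iterate_image.directed_ge
    (fun n => (hclosed n).isCompact) hclosed fun _ hx => hU.mem_nhds (hsub hx)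

/-- Claim at the start of the proof of Lemma 9.1: given neighborhoods `U_A` of the
attractor `A` and `U_R` of the repeller `R`, some iterate `f^{n₀}` maps the
complement of `U_R` into `U_A`. -/
theorem iterate_image_compl_subset
    {X : Type*} [TopologicalSpace X] [CompactSpace X]
    (f : X ≃ₜ X) (Mp Mm : Set X)
    (hMp : IsClosed Mp) (hMm : IsClosed Mm)
    (hcover : Mp ∪ Mm = univ)
    (hattr : f '' Mp ⊆ interior Mp)
    (hrep : f.symm '' Mm ⊆ interior Mm)
    (UA UR : Set X) (hUA : IsOpen UA) (hUR : IsOpen UR)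
    (hA : ⋂ n : ℕ, (⇑f)^[n] '' Mp ⊆ UA)
    (hR : ⋂ n : ℕ, (⇑f.symm)^[n] '' Mm ⊆ UR) :
    ∃ n₀ : ℕ, (⇑f)^[n₀] '' (univ \ UR) ⊆ UA := by
  obtain ⟨N, hN⟩ := exists_iterate_image_subset_of_iInter_subset f.symm.isClosedMap hMm
    (mapsTo_iff_image_subset.2 (hrep.trans interior_subset)) hUR hR
  obtain ⟨M, hM⟩ := exists_iterate_image_subset_of_iInter_subset f.isClosedMap hMp
    (mapsTo_iff_image_subset.2 (hattr.trans interior_subset)) hUA hA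
  refine ⟨M + N, ?_⟩
  rintro _ ⟨x, ⟨-, hxUR⟩, rfl⟩
  have hxMm : (⇑f)^[N] x ∉ Mm := fun hm =>
    hxUR (hN ⟨_, hm, Function.LeftInverse.iterate f.symm_apply_apply N x⟩)
  have hxMp : (⇑f)^[N] x ∈ Mp := (hcover ▸ mem_univ _ : _ ∈ Mp ∪ Mm).resolve_right hxMm
  rw [Function.iterate_add_apply]
  exact hM (mem_image_of_mem _ hxMp)
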